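/- Every 2-wqo permutation class is finitely based: if the set of permutations of C labeled by a two-element antichain is well-quasi-ordered under labeled containment, then the basis of C is finite. -/

import Mathlib

/-- `σ` is contained (as a pattern) in `π`. -/
def PermContains {k n : ℕ} (σ : Equiv.Perm (Fin k)) (π : Equiv.Perm (Fin n)) : Prop :=
  ∃ f : Fin k → Fin n, StrictMono f ∧ ∀ i j : Fin k, σ i < σ j ↔ π (f i) < π (f j)

/-- A permutation of arbitrary length. -/
abbrev Permutation := Σ n : ℕ, Equiv.Perm (Fin n)

/-- The containment quasi-order on permutations. -/
def PermLE (σ π : Permutation) : Prop := PermContains σ.2 π.2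

/-- Strict containment. -/
def PermLT (σ π : Permutation) : Prop := PermLE σ π ∧ ¬ PermLE π σ

/-- A permutation class: a set of permutations closed downward under containment. -/
def IsPermClass (C : Set Permutation) : Prop :=
  ∀ σ π : Permutation, PermLE σ π → π ∈ C → σ ∈ C

/-- `β` is a basis element of the class `C`: a minimal permutation not in `C`. -/
def IsBasisElt (C : Set Permutation) (β : Permutation) : Prop :=
  β ∉ C ∧ ∀ σ : Permutation, PermLT σ β → σ ∈ C

/-- An `L`-labeled permutation: a permutation with a labeling of its positions. -/
abbrev LPermutation (L : Type) := Σ n : ℕ, Equiv.Perm (Fin n) × (Fin n → L)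

/-- Labeled containment of labeled permutations, relative to the label
quasi-order `rL`. -/
def LPermLE {L : Type} (rL : L → L → Prop) (a b : LPermutation L) : Prop :=
  ∃ f : Fin a.1 → Fin b.1, StrictMono f ∧
    (∀ i j : Fin a.1, a.2.1 i < a.2.1 j ↔ b.2.1 (f i) < b.2.1 (f j)) ∧
    ∀ i : Fin a.1, rL (a.2.2 i) (b.2.2 (f i))

/-!
If the basis `B` of `C` were infinite, erase the maximum entry of each `β ∈ B`, labelling every
remaining entry by whether it stood to the left or to the right of that maximum. The results lie in
`C` (they are proper patterns of basis elements), so 2-wqo yields a labelled embedding between two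
of them. Sending the erased maximum to the erased maximum extends it to an embedding of one basis
element into another: the labels guarantee that positions stay on the correct side of the maximum,
and a maximum is above everything in both patterns. This contradicts `B` being an antichain.
-/

lemma PermLE.length_le {σ τ : Permutation} (h : PermLE σ τ) : σ.1 ≤ τ.1 :=
  let ⟨f, hf, _⟩ := h
  Fin.le_of_injective f hf.injective

lemma Equiv.Perm.eq_of_forall_lt_iff_lt {n : ℕ} {π ρ : Equiv.Perm (Fin n)}
    (h : ∀ i j, π i < π j ↔ ρ i < ρ j) : π = ρ := by
  have hmono : StrictMono (π ∘ ρ.symm) := fun a b hab => by simpa [h] using hab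
  exact Equiv.ext fun i => by simpa using congrFun hmono.eq_id (ρ i)

lemma PermLE.antisymm {σ τ : Permutation} (h₁ : PermLE σ τ) (h₂ : PermLE τ σ) : σ = τ := by
  obtain ⟨n, π⟩ := σ
  obtain ⟨k, ρ⟩ := τ
  obtain rfl : n = k := h₁.length_le.antisymm h₂.length_le
  obtain ⟨f, hf, hπρ⟩ := h₁
  obtain rfl : f = id := hf.eq_id
  obtain rfl := Equiv.Perm.eq_of_forall_lt_iff_lt hπρ
  rfl

lemma IsBasisElt.eq_of_permLE {C : Set Permutation} {β β' : Permutation} (hβ : IsBasisElt C β)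
    (hβ' : IsBasisElt C β') (h : PermLE β β') : β = β' := by
  by_contra hne
  exact hβ.1 (hβ'.2 β ⟨h, fun h' => hne (h.antisymm h')⟩)

section EraseMax

variable {m : ℕ} (π : Equiv.Perm (Fin (m + 1)))

def maxPos : Fin (m + 1) := π.symm (Fin.last m)

@[simp]
lemma apply_maxPos : π (maxPos π) = Fin.last m := π.apply_symm_apply _

lemma apply_succAbove_maxPos_ne_last (i : Fin m) : π ((maxPos π).succAbove i) ≠ Fin.last m := by
  rw [← apply_maxPos π, Ne, π.injective.eq_iff]
  exact Fin.succAbove_ne _ _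

noncomputable def eraseMax : Equiv.Perm (Fin m) :=
  Equiv.ofBijective
    (fun i => (π ((maxPos π).succAbove i)).castPred (apply_succAbove_maxPos_ne_last π i))
    (Finite.injective_iff_bijective.mp fun i j hij => by simpa using hij)

@[simp]
lemma castSucc_eraseMax (i : Fin m) :
    (eraseMax π i).castSucc = π ((maxPos π).succAbove i) := by
  simp [eraseMax]

lemma eraseMax_permLT : PermLT ⟨m, eraseMax π⟩ ⟨m + 1, π⟩ :=
  ⟨⟨(maxPos π).succAbove, Fin.strictMono_succAbove _, fun i j => by
      rw [← Fin.castSucc_lt_castSucc_iff, castSucc_eraseMax, castSucc_eraseMax]⟩,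
    fun h => by simpa using h.length_le⟩

end EraseMax

noncomputable def markMax : Permutation → LPermutation Bool
  | ⟨0, π⟩ => ⟨0, π, Fin.elim0⟩
  | ⟨m + 1, π⟩ => ⟨m, eraseMax π, fun i => decide (i.castSucc < maxPos π)⟩

lemma markMax_permLT {σ : Permutation} (hσ : σ.1 ≠ 0) :
    PermLT ⟨(markMax σ).1, (markMax σ).2.1⟩ σ := by
  obtain ⟨_ | m, π⟩ := σ
  · exact absurd rfl hσ
  · exact eraseMax_permLT π

lemma permLE_of_lPermLE_markMax {σ τ : Permutation} (hσ : σ.1 ≠ 0) (hτ : τ.1 ≠ 0)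
    (h : LPermLE (· = ·) (markMax σ) (markMax τ)) : PermLE σ τ := by
  obtain ⟨_ | m₁, π₁⟩ := σ
  · exact absurd rfl hσ
  obtain ⟨_ | m₂, π₂⟩ := τ
  · exact absurd rfl hτ
  simp only [LPermLE, markMax, decide_eq_decide] at h
  obtain ⟨f, hf, hpat, hside⟩ := h
  refine ⟨(maxPos π₁).insertNth (maxPos π₂) fun i => (maxPos π₂).succAbove (f i), ?_, ?_⟩
  · rw [Fin.strictMono_insertNth_iff]
    refine ⟨(Fin.strictMono_succAbove _).comp hf, fun i hi => ?_, fun i hi => ?_⟩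
    · rwa [Fin.succAbove_lt_iff_castSucc_lt, ← hside]
    · rwa [Fin.lt_succAbove_iff_le_castSucc, ← not_lt, ← hside, not_lt]
  · intro x y
    cases x using Fin.succAboveCases (maxPos π₁) <;>
      cases y using Fin.succAboveCases (maxPos π₁) <;>
      simp only [Fin.insertNth_apply_same, Fin.insertNth_apply_succAbove, apply_maxPos,
        ← castSucc_eraseMax, Fin.castSucc_lt_castSucc_iff, Fin.castSucc_lt_last, lt_irrefl,
        (Fin.le_last _).not_gt]
    exact hpat _ _

theorem stmt_14_general (C : Set Permutation)
    (h2 : ∀ f : ℕ → LPermutation Bool,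
        (∀ k : ℕ, (⟨(f k).1, (f k).2.1⟩ : Permutation) ∈ C) →
        ∃ i j : ℕ, i < j ∧ LPermLE (· = ·) (f i) (f j)) :
    {β : Permutation | IsBasisElt C β}.Finite := by
  have hempty : {β : Permutation | β.1 = 0}.Subsingleton := by
    rintro ⟨_, π⟩ rfl ⟨_, ρ⟩ (rfl : _ = 0)
    rw [Subsingleton.elim π ρ]
  suffices hpos : {β | IsBasisElt C β ∧ β.1 ≠ 0}.Finite from
    (hpos.union hempty.finite).subset fun β hβ => by
      by_cases h : β.1 = 0
      exacts [Or.inr h, Or.inl ⟨hβ, h⟩]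
  by_contra hinf
  let e := Set.Infinite.natEmbedding _ hinf
  obtain ⟨i, j, hij, hle⟩ :=
    h2 (fun k => markMax (e k)) fun k => (e k).2.1.2 _ (markMax_permLT (e k).2.2)
  exact hij.ne (e.injective (Subtype.ext ((e i).2.1.eq_of_permLE (e j).2.1
    (permLE_of_lPermLE_markMax (e i).2.2 (e j).2.2 hle))))

/-- Every 2-wqo permutation class is finitely based: if the members of `C`
labeled by a two-element antichain (here `Bool` with equality) are wqo under
labeled containment, then the basis of `C` is finite. -/
theorem stmt_14 (C : Set Permutation) (hC : IsPermClass C)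
    (h2 : ∀ f : ℕ → LPermutation Bool,
        (∀ k : ℕ, (⟨(f k).1, (f k).2.1⟩ : Permutation) ∈ C) →
        ∃ i j : ℕ, i < j ∧ LPermLE (· = ·) (f i) (f j)) :
    {β : Permutation | IsBasisElt C β}.Finite :=
  stmt_14_general C h2
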